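/- arXiv:1912.12375 — 3 statements merged into one kernel-verified Lean document; each statement's English description precedes it below -/
import Mathlib

section
/- Rotations and dilations map solutions to solutions: if c : I → ℝ^6 is a solution of the Kepler–Heisenberg Hamilton equations, then (a) for every φ ∈ ℝ, t ↦ ρ_φ(c(t)) is a solution on I; and (b) for every λ > 0, the curve t ↦ δ_λ(c(λ^{−2}·t)) is a solution on the rescaled interval {t : λ^{−2}·t ∈ I}. -/
open Real Set

/-- The Kepler-Heisenberg Hamiltonian on phase space `ℝ^6` with coordinates
`(x, y, z, pₓ, p_y, p_z)`. -/
noncomputable def KH (x y z px py pz : ℝ) : ℝ :=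
  (1/2) * ((px - (1/2) * y * pz)^2 + (py + (1/2) * x * pz)^2)
    - 1 / (8 * π * Real.sqrt ((x^2 + y^2)^2 + 16 * z^2))

/-- The adapted coordinate `s = (1/4)·log((x² + y²)² + 16z²)`. -/
noncomputable def sCoord (x y z : ℝ) : ℝ :=
  (1/4) * Real.log ((x^2 + y^2)^2 + 16 * z^2)

/-- The adapted coordinate `u = arctan(4z/(x² + y²))`. -/
noncomputable def uCoord (x y z : ℝ) : ℝ :=
  Real.arctan (4 * z / (x^2 + y^2))

/-- The dilational momentum `J = p_s = x·pₓ + y·p_y + 2z·p_z`. -/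
def Jmom (x y z px py pz : ℝ) : ℝ := x * px + y * py + 2 * z * pz

/-- The angular momentum `p_θ = x·p_y − y·pₓ`. -/
def pTheta (x y px py : ℝ) : ℝ := x * py - y * px

/-- The adapted momentum coordinate `p_u`. -/
noncomputable def pU (x y z px py pz : ℝ) : ℝ :=
  (1/4) * pz * (x^2 + y^2) - 2 * z * (x * px + y * py) / (x^2 + y^2)

/-- Rotation by angle `φ` about the `z`-axis, lifted to phase space. -/
noncomputable def rot (φ : ℝ) (q : ℝ × ℝ × ℝ × ℝ × ℝ × ℝ) : ℝ × ℝ × ℝ × ℝ × ℝ × ℝ :=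
  (q.1 * Real.cos φ - q.2.1 * Real.sin φ,
   q.1 * Real.sin φ + q.2.1 * Real.cos φ,
   q.2.2.1,
   q.2.2.2.1 * Real.cos φ - q.2.2.2.2.1 * Real.sin φ,
   q.2.2.2.1 * Real.sin φ + q.2.2.2.2.1 * Real.cos φ,
   q.2.2.2.2.2)

/-- The Carnot dilation by `λ > 0`, lifted to phase space:
`δ_λ(x, y, z, pₓ, p_y, p_z) = (λx, λy, λ²z, λ⁻¹pₓ, λ⁻¹p_y, λ⁻²p_z)`. -/
noncomputable def dil (l : ℝ) (q : ℝ × ℝ × ℝ × ℝ × ℝ × ℝ) : ℝ × ℝ × ℝ × ℝ × ℝ × ℝ :=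
  (l * q.1, l * q.2.1, l^2 * q.2.2.1,
   l⁻¹ * q.2.2.2.1, l⁻¹ * q.2.2.2.2.1, (l^2)⁻¹ * q.2.2.2.2.2)

/-- The Hamiltonian as a function on the product phase space. -/
noncomputable def KH6 (q : ℝ × ℝ × ℝ × ℝ × ℝ × ℝ) : ℝ :=
  KH q.1 q.2.1 q.2.2.1 q.2.2.2.1 q.2.2.2.2.1 q.2.2.2.2.2

/-- `c = (x, y, z, pₓ, p_y, p_z)` is a solution of Hamilton's equations for `KH` on the
open interval `I`: each coordinate function is differentiable with derivative given by the
corresponding (signed) partial derivative of `KH`, and the position avoids the origin. -/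
def IsSolutionOn (I : Set ℝ) (x y z px py pz : ℝ → ℝ) : Prop :=
  IsOpen I ∧ I.OrdConnected ∧ I.Nonempty ∧
  (∀ t ∈ I, (x t, y t, z t) ≠ (0, 0, 0)) ∧
  (∀ t ∈ I,
    HasDerivAt x (deriv (fun a => KH (x t) (y t) (z t) a (py t) (pz t)) (px t)) t ∧
    HasDerivAt y (deriv (fun a => KH (x t) (y t) (z t) (px t) a (pz t)) (py t)) t ∧
    HasDerivAt z (deriv (fun a => KH (x t) (y t) (z t) (px t) (py t) a) (pz t)) t ∧
    HasDerivAt px (-(deriv (fun a => KH a (y t) (z t) (px t) (py t) (pz t)) (x t))) t ∧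
    HasDerivAt py (-(deriv (fun a => KH (x t) a (z t) (px t) (py t) (pz t)) (y t))) t ∧
    HasDerivAt pz (-(deriv (fun a => KH (x t) (y t) a (px t) (py t) (pz t)) (z t))) t)

/-- A solution on a maximal open interval: it cannot be extended to a solution on any
strictly larger open interval. -/
def IsMaximalSolution (I : Set ℝ) (x y z px py pz : ℝ → ℝ) : Prop :=
  IsSolutionOn I x y z px py pz ∧
  ∀ (I' : Set ℝ) (x' y' z' px' py' pz' : ℝ → ℝ),
    IsSolutionOn I' x' y' z' px' py' pz' → I ⊆ I' →
    (∀ t ∈ I, x' t = x t ∧ y' t = y t ∧ z' t = z t ∧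
      px' t = px t ∧ py' t = py t ∧ pz' t = pz t) →
    I' = I

/-!
`KH` is invariant under the rotations `ρ_φ` and homogeneous of degree `-2` under the dilations
`δ_λ` (the kinetic term is quadratic in the momenta, the potential is `-1/(8π N²)` for the
Korányi gauge `N`, which has weight one). Differentiating, the `x`- and `y`-partials rotate with
`ρ_φ` while the others are invariant, and each partial derivative scales under `δ_λ` by `λ⁻²`
divided by the weight of its variable; the time change `t ↦ λ⁻² t` compensates exactly that
factor.
-/

/-- The fourth power of the Korányi gauge: the potential term of `KH` is `-1 / (8π √gauge4)`. -/
def gauge4 (x y z : ℝ) : ℝ := (x ^ 2 + y ^ 2) ^ 2 + 16 * z ^ 2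

lemma gauge4_pos_iff {x y z : ℝ} : 0 < gauge4 x y z ↔ (x, y, z) ≠ (0, 0, 0) := by
  constructor
  · intro hpos heq
    simp only [Prod.mk.injEq] at heq
    obtain ⟨rfl, rfl, rfl⟩ := heq
    norm_num [gauge4] at hpos
  · intro h
    rw [ne_eq, Prod.mk.injEq, Prod.mk.injEq, not_and_or, not_and_or] at h
    unfold gauge4
    rcases h with hx | hy | hz <;> positivity

lemma rotate_sq_add_sq (x y φ : ℝ) :
    (x * cos φ - y * sin φ) ^ 2 + (x * sin φ + y * cos φ) ^ 2 = x ^ 2 + y ^ 2 := by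
  linear_combination (x ^ 2 + y ^ 2) * sin_sq_add_cos_sq φ

lemma gauge4_rotate (x y z φ : ℝ) :
    gauge4 (x * cos φ - y * sin φ) (x * sin φ + y * cos φ) z = gauge4 x y z := by
  simp only [gauge4, rotate_sq_add_sq]

lemma gauge4_dilate (l x y z : ℝ) :
    gauge4 (l * x) (l * y) (l ^ 2 * z) = (l ^ 2) ^ 2 * gauge4 x y z := by
  simp only [gauge4]; ring

lemma sqrt_gauge4_dilate (l x y z : ℝ) :
    √(gauge4 (l * x) (l * y) (l ^ 2 * z)) = l ^ 2 * √(gauge4 x y z) := by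
  rw [gauge4_dilate, Real.sqrt_mul (by positivity), Real.sqrt_sq (by positivity)]

-- `KHdq` is `∂KH/∂q` in closed form, taking only the arguments it depends on.
noncomputable def KHdpx (y px pz : ℝ) : ℝ := px - 1 / 2 * y * pz

noncomputable def KHdpy (x py pz : ℝ) : ℝ := py + 1 / 2 * x * pz

noncomputable def KHdpz (x y px py pz : ℝ) : ℝ := (x * KHdpy x py pz - y * KHdpx y px pz) / 2

noncomputable def KHdx (x y z py pz : ℝ) : ℝ :=
  pz / 2 * KHdpy x py pz + x * (x ^ 2 + y ^ 2) / (4 * π * (gauge4 x y z * √(gauge4 x y z)))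

noncomputable def KHdy (x y z px pz : ℝ) : ℝ :=
  -(pz / 2 * KHdpx y px pz) + y * (x ^ 2 + y ^ 2) / (4 * π * (gauge4 x y z * √(gauge4 x y z)))

noncomputable def KHdz (x y z : ℝ) : ℝ := 2 * z / (π * (gauge4 x y z * √(gauge4 x y z)))

lemma HasDerivAt.one_div_const_mul_sqrt {f : ℝ → ℝ} {f' c s : ℝ} (hf : HasDerivAt f f' s)
    (hc : c ≠ 0) (hpos : 0 < f s) :
    HasDerivAt (fun a => 1 / (c * √(f a))) (-f' / (2 * c * (f s * √(f s)))) s := by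
  have hsqrt : 0 < √(f s) := Real.sqrt_pos.mpr hpos
  have h := (hasDerivAt_const s (1 : ℝ)).fun_div ((hf.sqrt hpos.ne').const_mul c) (by positivity)
  refine h.congr_deriv ?_
  field_simp
  rw [Real.sq_sqrt hpos.le]
  ring

theorem HasDerivAt.KH {x y z px py pz : ℝ → ℝ} {x' y' z' px' py' pz' s : ℝ}
    (hx : HasDerivAt x x' s) (hy : HasDerivAt y y' s) (hz : HasDerivAt z z' s)
    (hpx : HasDerivAt px px' s) (hpy : HasDerivAt py py' s) (hpz : HasDerivAt pz pz' s)
    (h0 : (x s, y s, z s) ≠ (0, 0, 0)) :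
    HasDerivAt (fun a => KH (x a) (y a) (z a) (px a) (py a) (pz a))
      (KHdx (x s) (y s) (z s) (py s) (pz s) * x' +
        KHdy (x s) (y s) (z s) (px s) (pz s) * y' + KHdz (x s) (y s) (z s) * z' +
        KHdpx (y s) (px s) (pz s) * px' + KHdpy (x s) (py s) (pz s) * py' +
        KHdpz (x s) (y s) (px s) (py s) (pz s) * pz') s := by
  have hQ :=
    (((hx.fun_pow 2).fun_add (hy.fun_pow 2)).fun_pow 2).fun_add ((hz.fun_pow 2).const_mul 16)
  have hPx := hpx.fun_sub ((hy.const_mul (1 / 2)).fun_mul hpz)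
  have hPy := hpy.fun_add ((hx.const_mul (1 / 2)).fun_mul hpz)
  have hT := (((hPx.fun_pow 2).fun_add (hPy.fun_pow 2)).const_mul (1 / 2))
  have hV := hQ.one_div_const_mul_sqrt (by positivity : 8 * π ≠ 0) (gauge4_pos_iff.mpr h0)
  refine (hT.fun_sub hV).congr_deriv ?_
  simp only [KHdx, KHdy, KHdz, KHdpx, KHdpy, KHdpz, gauge4]
  field_simp
  ring

section Partials

variable {x y z px py pz : ℝ}

lemma deriv_KH_x (h : (x, y, z) ≠ (0, 0, 0)) :
    deriv (fun a => KH a y z px py pz) x = KHdx x y z py pz := by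
  simpa using (HasDerivAt.KH (hasDerivAt_id' x) (hasDerivAt_const x y) (hasDerivAt_const x z)
    (hasDerivAt_const x px) (hasDerivAt_const x py) (hasDerivAt_const x pz) h).deriv

lemma deriv_KH_y (h : (x, y, z) ≠ (0, 0, 0)) :
    deriv (fun a => KH x a z px py pz) y = KHdy x y z px pz := by
  simpa using (HasDerivAt.KH (hasDerivAt_const y x) (hasDerivAt_id' y) (hasDerivAt_const y z)
    (hasDerivAt_const y px) (hasDerivAt_const y py) (hasDerivAt_const y pz) h).deriv

lemma deriv_KH_z (h : (x, y, z) ≠ (0, 0, 0)) :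
    deriv (fun a => KH x y a px py pz) z = KHdz x y z := by
  simpa using (HasDerivAt.KH (hasDerivAt_const z x) (hasDerivAt_const z y) (hasDerivAt_id' z)
    (hasDerivAt_const z px) (hasDerivAt_const z py) (hasDerivAt_const z pz) h).deriv

lemma deriv_KH_px (h : (x, y, z) ≠ (0, 0, 0)) :
    deriv (fun a => KH x y z a py pz) px = KHdpx y px pz := by
  simpa using (HasDerivAt.KH (hasDerivAt_const px x) (hasDerivAt_const px y)
    (hasDerivAt_const px z) (hasDerivAt_id' px) (hasDerivAt_const px py)
    (hasDerivAt_const px pz) h).deriv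

lemma deriv_KH_py (h : (x, y, z) ≠ (0, 0, 0)) :
    deriv (fun a => KH x y z px a pz) py = KHdpy x py pz := by
  simpa using (HasDerivAt.KH (hasDerivAt_const py x) (hasDerivAt_const py y)
    (hasDerivAt_const py z) (hasDerivAt_const py px) (hasDerivAt_id' py)
    (hasDerivAt_const py pz) h).deriv

lemma deriv_KH_pz (h : (x, y, z) ≠ (0, 0, 0)) :
    deriv (fun a => KH x y z px py a) pz = KHdpz x y px py pz := by
  simpa using (HasDerivAt.KH (hasDerivAt_const pz x) (hasDerivAt_const pz y)
    (hasDerivAt_const pz z) (hasDerivAt_const pz px) (hasDerivAt_const pz py)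
    (hasDerivAt_id' pz) h).deriv

end Partials

def HamiltonEquationsAt (x y z px py pz : ℝ → ℝ) (t : ℝ) : Prop :=
  HasDerivAt x (KHdpx (y t) (px t) (pz t)) t ∧
  HasDerivAt y (KHdpy (x t) (py t) (pz t)) t ∧
  HasDerivAt z (KHdpz (x t) (y t) (px t) (py t) (pz t)) t ∧
  HasDerivAt px (-KHdx (x t) (y t) (z t) (py t) (pz t)) t ∧
  HasDerivAt py (-KHdy (x t) (y t) (z t) (px t) (pz t)) t ∧
  HasDerivAt pz (-KHdz (x t) (y t) (z t)) t

lemma isSolutionOn_iff {I : Set ℝ} {x y z px py pz : ℝ → ℝ} :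
    IsSolutionOn I x y z px py pz ↔
      IsOpen I ∧ I.OrdConnected ∧ I.Nonempty ∧ (∀ t ∈ I, (x t, y t, z t) ≠ (0, 0, 0)) ∧
        ∀ t ∈ I, HamiltonEquationsAt x y z px py pz t := by
  refine and_congr_right' <| and_congr_right' <| and_congr_right' <| and_congr_right fun h0 => ?_
  refine forall₂_congr fun t ht => ?_
  rw [deriv_KH_x (h0 t ht), deriv_KH_y (h0 t ht), deriv_KH_z (h0 t ht), deriv_KH_px (h0 t ht),
    deriv_KH_py (h0 t ht), deriv_KH_pz (h0 t ht)]
  rfl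

lemma KHdpz_rotate (x y px py pz φ : ℝ) :
    KHdpz (x * cos φ - y * sin φ) (x * sin φ + y * cos φ)
      (px * cos φ - py * sin φ) (px * sin φ + py * cos φ) pz = KHdpz x y px py pz := by
  simp only [KHdpz, KHdpy, KHdpx]
  linear_combination
    (x * (py + 1 / 2 * x * pz) - y * (px - 1 / 2 * y * pz)) / 2 * sin_sq_add_cos_sq φ

section Rotation

variable {x y z px py pz : ℝ → ℝ} {t : ℝ} (φ : ℝ)

lemma HamiltonEquationsAt.rotate (h : HamiltonEquationsAt x y z px py pz t) :
    HamiltonEquationsAt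
      (fun t => x t * cos φ - y t * sin φ) (fun t => x t * sin φ + y t * cos φ) z
      (fun t => px t * cos φ - py t * sin φ) (fun t => px t * sin φ + py t * cos φ) pz t := by
  obtain ⟨hx, hy, hz, hpx, hpy, hpz⟩ := h
  refine ⟨((hx.mul_const _).fun_sub (hy.mul_const _)).congr_deriv ?_,
    ((hx.mul_const _).fun_add (hy.mul_const _)).congr_deriv ?_, hz.congr_deriv ?_,
    ((hpx.mul_const _).fun_sub (hpy.mul_const _)).congr_deriv ?_,
    ((hpx.mul_const _).fun_add (hpy.mul_const _)).congr_deriv ?_, hpz.congr_deriv ?_⟩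
  all_goals simp only [KHdx, KHdy, KHdz, KHdpx, KHdpy, KHdpz_rotate, gauge4_rotate,
    rotate_sq_add_sq] <;> ring

end Rotation

lemma IsSolutionOn.rotate {I : Set ℝ} {x y z px py pz : ℝ → ℝ}
    (hsol : IsSolutionOn I x y z px py pz) (φ : ℝ) :
    IsSolutionOn I
      (fun t => x t * cos φ - y t * sin φ) (fun t => x t * sin φ + y t * cos φ) z
      (fun t => px t * cos φ - py t * sin φ) (fun t => px t * sin φ + py t * cos φ) pz := by
  rw [isSolutionOn_iff] at hsol ⊢
  obtain ⟨hI, hconn, hne, h0, heq⟩ := hsol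
  refine ⟨hI, hconn, hne, fun t ht => ?_, fun t ht => (heq t ht).rotate φ⟩
  rw [← gauge4_pos_iff, gauge4_rotate, gauge4_pos_iff]
  exact h0 t ht

lemma HasDerivAt.const_mul_comp_const_mul {f : ℝ → ℝ} {f' : ℝ} (c μ t : ℝ)
    (hf : HasDerivAt f f' (μ * t)) :
    HasDerivAt (fun s => c * f (μ * s)) (c * (f' * μ)) t := by
  simpa using (hf.comp t ((hasDerivAt_id' t).const_mul μ)).const_mul c

section Dilation

variable {x y z px py pz : ℝ → ℝ} {t l : ℝ}

lemma HamiltonEquationsAt.dilate (hl : l ≠ 0)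
    (h : HamiltonEquationsAt x y z px py pz (l ^ (-2 : ℤ) * t)) :
    HamiltonEquationsAt
      (fun t => l * x (l ^ (-2 : ℤ) * t)) (fun t => l * y (l ^ (-2 : ℤ) * t))
      (fun t => l ^ 2 * z (l ^ (-2 : ℤ) * t)) (fun t => l⁻¹ * px (l ^ (-2 : ℤ) * t))
      (fun t => l⁻¹ * py (l ^ (-2 : ℤ) * t)) (fun t => (l ^ 2)⁻¹ * pz (l ^ (-2 : ℤ) * t)) t := by
  obtain ⟨hx, hy, hz, hpx, hpy, hpz⟩ := h
  refine ⟨(hx.const_mul_comp_const_mul _ _ _).congr_deriv ?_,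
    (hy.const_mul_comp_const_mul _ _ _).congr_deriv ?_,
    (hz.const_mul_comp_const_mul _ _ _).congr_deriv ?_,
    (hpx.const_mul_comp_const_mul _ _ _).congr_deriv ?_,
    (hpy.const_mul_comp_const_mul _ _ _).congr_deriv ?_,
    (hpz.const_mul_comp_const_mul _ _ _).congr_deriv ?_⟩
  all_goals
    simp only [KHdx, KHdy, KHdz, KHdpx, KHdpy, KHdpz, sqrt_gauge4_dilate]
    simp only [gauge4_dilate, zpow_neg, zpow_ofNat]
    field_simp

lemma IsSolutionOn.dilate {I : Set ℝ} (hsol : IsSolutionOn I x y z px py pz) (hl : l ≠ 0) :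
    IsSolutionOn {t : ℝ | l ^ (-2 : ℤ) * t ∈ I}
      (fun t => l * x (l ^ (-2 : ℤ) * t)) (fun t => l * y (l ^ (-2 : ℤ) * t))
      (fun t => l ^ 2 * z (l ^ (-2 : ℤ) * t)) (fun t => l⁻¹ * px (l ^ (-2 : ℤ) * t))
      (fun t => l⁻¹ * py (l ^ (-2 : ℤ) * t)) (fun t => (l ^ 2)⁻¹ * pz (l ^ (-2 : ℤ) * t)) := by
  rw [isSolutionOn_iff] at hsol ⊢
  obtain ⟨hI, hconn, hne, h0, heq⟩ := hsol
  have hμ : 0 < l ^ (-2 : ℤ) := by simp only [zpow_neg, zpow_ofNat]; positivity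
  refine ⟨hI.preimage (continuous_const_mul _),
    hconn.preimage_mono (monotone_mul_left_of_nonneg hμ.le),
    hne.preimage (mul_left_surjective₀ hμ.ne'), fun t ht => ?_, fun t ht => (heq _ ht).dilate hl⟩
  rw [← gauge4_pos_iff, gauge4_dilate]
  exact mul_pos (by positivity) (gauge4_pos_iff.mpr (h0 _ ht))

end Dilation

/-- Rotations and (time-rescaled) dilations map solutions to solutions:
(a) `t ↦ ρ_φ(c(t))` is a solution on `I`;
(b) `t ↦ δ_λ(c(λ⁻²·t))` is a solution on `{t : λ⁻²·t ∈ I}`. -/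
theorem kepler_heisenberg_symmetries_preserve_solutions
    (I : Set ℝ) (x y z px py pz : ℝ → ℝ)
    (hsol : IsSolutionOn I x y z px py pz) :
    (∀ φ : ℝ, IsSolutionOn I
      (fun t => x t * Real.cos φ - y t * Real.sin φ)
      (fun t => x t * Real.sin φ + y t * Real.cos φ)
      z
      (fun t => px t * Real.cos φ - py t * Real.sin φ)
      (fun t => px t * Real.sin φ + py t * Real.cos φ)
      pz) ∧
    (∀ lam : ℝ, 0 < lam → IsSolutionOn {t : ℝ | lam ^ (-2 : ℤ) * t ∈ I}
      (fun t => lam * x (lam ^ (-2 : ℤ) * t))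
      (fun t => lam * y (lam ^ (-2 : ℤ) * t))
      (fun t => lam ^ 2 * z (lam ^ (-2 : ℤ) * t))
      (fun t => lam⁻¹ * px (lam ^ (-2 : ℤ) * t))
      (fun t => lam⁻¹ * py (lam ^ (-2 : ℤ) * t))
      (fun t => (lam ^ 2)⁻¹ * pz (lam ^ (-2 : ℤ) * t))) :=
  ⟨hsol.rotate, fun _ hl => hsol.dilate hl.ne'⟩
end

section
/- Let q = (x, y, z, p_x, p_y, p_z) ∈ ℝ^6 with x² + y² > 0 and H(q) = 0. Then the dilational momentum p_s = J satisfies −tan(u)·p_θ − √(2·tan²(u)·p_θ² + 1/(4π·cos(u))) ≤ p_s ≤ −tan(u)·p_θ + √(2·tan²(u)·p_θ² + 1/(4π·cos(u))), where u and p_θ are the adapted coordinate functions of q (the quantity under the square root is positive since cos(u) > 0). -/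
open Real Set

/-!
Write `r = x² + y²` and `R = √(r² + 16z²)`, so that `tan u = 4z/r` and `cos u = r/R`. On the
zero-energy level the horizontal momentum `(A, B) = (pₓ − y p_z/2, p_y + x p_z/2)` has
`A² + B² = 1/(4πR)`, and `J + tan u · p_θ = A c + B d` for the vector
`(c, d) = (x − 4zy/r, y + 4zx/r)` of squared length `R²/r`. Cauchy–Schwarz then gives
`(J + tan u · p_θ)² ≤ R/(4πr) = 1/(4π cos u)`, which is even sharper than the claim.
-/

lemma add_mul_add_sq_le_sq_add_sq_mul_sq_add_sq (a b c d : ℝ) :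
    (a * c + b * d)^2 ≤ (a^2 + b^2) * (c^2 + d^2) := by
  nlinarith [sq_nonneg (a * d - b * c)]

lemma tan_uCoord (x y z : ℝ) : tan (uCoord x y z) = 4 * z / (x^2 + y^2) :=
  tan_arctan _

lemma cos_uCoord {x y z : ℝ} (h : 0 < x^2 + y^2) :
    cos (uCoord x y z) = (x^2 + y^2) / √((x^2 + y^2)^2 + 16 * z^2) := by
  have h_one_add_sq :
      1 + (4 * z / (x^2 + y^2))^2 = ((x^2 + y^2)^2 + 16 * z^2) / (x^2 + y^2)^2 := by
    field_simp
    ring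
  rw [uCoord, cos_arctan, h_one_add_sq, sqrt_div' _ (sq_nonneg _), sqrt_sq h.le, one_div_div]

lemma horizontal_momentum_sq_of_KH_eq_zero {x y z px py pz : ℝ} (hH : KH x y z px py pz = 0) :
    (px - (1/2) * y * pz)^2 + (py + (1/2) * x * pz)^2 =
      1 / (4 * π * √((x^2 + y^2)^2 + 16 * z^2)) := by
  rw [KH] at hH
  linear_combination 2 * hH

lemma Jmom_add_mul_pTheta_eq {x y z px py pz : ℝ} (h : x^2 + y^2 ≠ 0) :
    Jmom x y z px py pz + 4 * z / (x^2 + y^2) * pTheta x y px py =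
      (px - (1/2) * y * pz) * (x - 4 * z * y / (x^2 + y^2)) +
        (py + (1/2) * x * pz) * (y + 4 * z * x / (x^2 + y^2)) := by
  rw [Jmom, pTheta]
  field_simp
  ring

lemma sq_add_sq_shift_eq {x y z : ℝ} (h : x^2 + y^2 ≠ 0) :
    (x - 4 * z * y / (x^2 + y^2))^2 + (y + 4 * z * x / (x^2 + y^2))^2 =
      ((x^2 + y^2)^2 + 16 * z^2) / (x^2 + y^2) := by
  field_simp
  ring

lemma sq_Jmom_add_tan_mul_pTheta_le {x y z px py pz : ℝ} (h : 0 < x^2 + y^2)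
    (hH : KH x y z px py pz = 0) :
    (Jmom x y z px py pz + tan (uCoord x y z) * pTheta x y px py)^2 ≤
      1 / (4 * π * cos (uCoord x y z)) := by
  have h_R_sq : √((x^2 + y^2)^2 + 16 * z^2)^2 = (x^2 + y^2)^2 + 16 * z^2 :=
    sq_sqrt (by positivity)
  calc (Jmom x y z px py pz + tan (uCoord x y z) * pTheta x y px py)^2
      = ((px - (1/2) * y * pz) * (x - 4 * z * y / (x^2 + y^2)) +
          (py + (1/2) * x * pz) * (y + 4 * z * x / (x^2 + y^2)))^2 := by
        rw [tan_uCoord, Jmom_add_mul_pTheta_eq h.ne']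
    _ ≤ ((px - (1/2) * y * pz)^2 + (py + (1/2) * x * pz)^2) *
          ((x - 4 * z * y / (x^2 + y^2))^2 + (y + 4 * z * x / (x^2 + y^2))^2) :=
        add_mul_add_sq_le_sq_add_sq_mul_sq_add_sq _ _ _ _
    _ = 1 / (4 * π * cos (uCoord x y z)) := by
      rw [horizontal_momentum_sq_of_KH_eq_zero hH, sq_add_sq_shift_eq h.ne', cos_uCoord h]
      field_simp
      exact h_R_sq.symm

/-- **Lemma (bounds on the dilational momentum).** At any zero-energy phase point off the
`z`-axis, `−tan(u)·p_θ − √(2 tan²(u)·p_θ² + 1/(4π cos u)) ≤ p_s ≤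
−tan(u)·p_θ + √(2 tan²(u)·p_θ² + 1/(4π cos u))`. -/
theorem kepler_heisenberg_ps_bounds
    (x y z px py pz : ℝ) (h : x^2 + y^2 > 0)
    (hH : KH x y z px py pz = 0) :
    -Real.tan (uCoord x y z) * pTheta x y px py -
        Real.sqrt (2 * (Real.tan (uCoord x y z))^2 * (pTheta x y px py)^2 +
          1 / (4 * π * Real.cos (uCoord x y z))) ≤
      Jmom x y z px py pz ∧
    Jmom x y z px py pz ≤
      -Real.tan (uCoord x y z) * pTheta x y px py +
        Real.sqrt (2 * (Real.tan (uCoord x y z))^2 * (pTheta x y px py)^2 +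
          1 / (4 * π * Real.cos (uCoord x y z))) := by
  have h_sq := sq_Jmom_add_tan_mul_pTheta_le h hH
  have h_abs : |Jmom x y z px py pz + tan (uCoord x y z) * pTheta x y px py| ≤
      √(2 * tan (uCoord x y z)^2 * pTheta x y px py^2 + 1 / (4 * π * cos (uCoord x y z))) :=
    abs_le_sqrt (h_sq.trans (le_add_of_nonneg_left (by positivity)))
  constructor <;> linarith [abs_le.mp h_abs]
end

section
/- Let c : I → ℝ^6 be a solution of the Kepler–Heisenberg Hamilton equations with H(c(t)) = 0 for all t ∈ I, with (x(t), y(t)) ≠ (0, 0) for all t ∈ I, and such that z(t₀) = 0 for some t₀ ∈ I. Then the (constant) dilational momentum J = x·p_x + y·p_y + 2z·p_z satisfies |J| ≤ 1/(2√π). -/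
open Real Set

/-!
The Carnot dilations `dil l` scale `KH` by `l⁻²`, and `Jmom` is their momentum map, so Euler's
identity for this weighted homogeneity says that `J' = 2H` along every solution; on a zero-energy
solution `J` is therefore constant. At a time with `z = 0` the `p_z`-terms cancel and
`J = x (pₓ - y p_z / 2) + y (p_y + x p_z / 2)`, so Cauchy–Schwarz together with `H = 0`, i.e.
`(pₓ - y p_z / 2)² + (p_y + x p_z / 2)² = 1 / (4π (x² + y²))`, gives `J² ≤ 1 / (4π)`.
-/

lemma sq_add_sq_sq_add_sq_pos {a b c : ℝ} (h : (a, b, c) ≠ (0, 0, 0)) :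
    0 < (a ^ 2 + b ^ 2) ^ 2 + 16 * c ^ 2 := by
  have : a ≠ 0 ∨ b ≠ 0 ∨ c ≠ 0 := by
    by_contra! h0
    exact h (by simp [h0])
  rcases this with h | h | h <;> positivity

lemma hasDerivAt_one_div_eight_pi_mul_sqrt {ρ : ℝ} (hρ : 0 < ρ) :
    HasDerivAt (fun v => 1 / (8 * π * √v)) (-1 / (16 * π * (ρ * √ρ))) ρ := by
  have hsqrt : 0 < √ρ := Real.sqrt_pos.2 hρ
  have h := ((Real.hasDerivAt_sqrt hρ.ne').const_mul (8 * π)).inv (by positivity)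
  simp only [one_div]
  refine h.congr_deriv ?_
  field_simp
  rw [Real.sq_sqrt hρ.le]
  ring

section partialDerivatives

variable (a b c p q r : ℝ)

lemma hasDerivAt_KH_px : HasDerivAt (fun v => KH a b c v q r) (p - b * r / 2) p := by
  unfold KH
  have h := ((((hasDerivAt_id p).sub_const (1 / 2 * b * r)).pow 2).add_const
    ((q + 1 / 2 * a * r) ^ 2)).const_mul (1 / 2 : ℝ)
  exact (h.sub_const _).congr_deriv (by simp only [id]; ring)

lemma hasDerivAt_KH_py : HasDerivAt (fun v => KH a b c p v r) (q + a * r / 2) q := by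
  unfold KH
  have h := ((((hasDerivAt_id q).add_const (1 / 2 * a * r)).pow 2).const_add
    ((p - 1 / 2 * b * r) ^ 2)).const_mul (1 / 2 : ℝ)
  exact (h.sub_const _).congr_deriv (by simp only [id]; ring)

lemma hasDerivAt_KH_pz :
    HasDerivAt (fun v => KH a b c p q v) ((a * (q + a * r / 2) - b * (p - b * r / 2)) / 2) r := by
  unfold KH
  have hx := ((hasDerivAt_id r).const_mul (1 / 2 * b)).const_sub p
  have hy := ((hasDerivAt_id r).const_mul (1 / 2 * a)).const_add q
  have h := ((hx.pow 2).add (hy.pow 2)).const_mul (1 / 2 : ℝ)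
  exact (h.sub_const _).congr_deriv (by simp only [id]; ring)

variable {a b c}

lemma hasDerivAt_KH_x (hρ : 0 < (a ^ 2 + b ^ 2) ^ 2 + 16 * c ^ 2) :
    HasDerivAt (fun v => KH v b c p q r)
      (r / 2 * (q + a * r / 2) + a * (a ^ 2 + b ^ 2) /
        (4 * π * (((a ^ 2 + b ^ 2) ^ 2 + 16 * c ^ 2) *
          √((a ^ 2 + b ^ 2) ^ 2 + 16 * c ^ 2)))) a := by
  unfold KH
  have hkin := (((((hasDerivAt_id a).const_mul (1 / 2)).mul_const r).const_add q).pow 2).const_add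
    ((p - 1 / 2 * b * r) ^ 2) |>.const_mul (1 / 2 : ℝ)
  have hρ' := ((((hasDerivAt_id a).pow 2).add_const (b ^ 2)).pow 2).add_const (16 * c ^ 2)
  have h := hkin.sub ((hasDerivAt_one_div_eight_pi_mul_sqrt hρ).comp a hρ')
  refine h.congr_deriv ?_
  have hsqrt := Real.sqrt_pos.2 hρ
  simp only [id, Pi.pow_apply]
  field_simp
  ring

lemma hasDerivAt_KH_y (hρ : 0 < (a ^ 2 + b ^ 2) ^ 2 + 16 * c ^ 2) :
    HasDerivAt (fun v => KH a v c p q r)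
      (-(r / 2) * (p - b * r / 2) + b * (a ^ 2 + b ^ 2) /
        (4 * π * (((a ^ 2 + b ^ 2) ^ 2 + 16 * c ^ 2) *
          √((a ^ 2 + b ^ 2) ^ 2 + 16 * c ^ 2)))) b := by
  unfold KH
  have hkin := (((((hasDerivAt_id b).const_mul (1 / 2)).mul_const r).const_sub p).pow 2).add_const
    ((q + 1 / 2 * a * r) ^ 2) |>.const_mul (1 / 2 : ℝ)
  have hρ' := ((((hasDerivAt_id b).pow 2).const_add (a ^ 2)).pow 2).add_const (16 * c ^ 2)
  have h := hkin.sub ((hasDerivAt_one_div_eight_pi_mul_sqrt hρ).comp b hρ')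
  refine h.congr_deriv ?_
  have hsqrt := Real.sqrt_pos.2 hρ
  simp only [id, Pi.pow_apply]
  field_simp
  ring

lemma hasDerivAt_KH_z (hρ : 0 < (a ^ 2 + b ^ 2) ^ 2 + 16 * c ^ 2) :
    HasDerivAt (fun v => KH a b v p q r)
      (2 * c / (π * (((a ^ 2 + b ^ 2) ^ 2 + 16 * c ^ 2) *
        √((a ^ 2 + b ^ 2) ^ 2 + 16 * c ^ 2)))) c := by
  unfold KH
  have hρ' := (((hasDerivAt_id c).pow 2).const_mul (16 : ℝ)).const_add ((a ^ 2 + b ^ 2) ^ 2)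
  have h := ((hasDerivAt_one_div_eight_pi_mul_sqrt hρ).comp c hρ').const_sub
    (1 / 2 * ((p - 1 / 2 * b * r) ^ 2 + (q + 1 / 2 * a * r) ^ 2))
  refine h.congr_deriv ?_
  have hsqrt := Real.sqrt_pos.2 hρ
  simp only [id]
  field_simp
  ring

end partialDerivatives

lemma KH_euler_identity {a b c : ℝ} (p q r : ℝ) (hρ : 0 < (a ^ 2 + b ^ 2) ^ 2 + 16 * c ^ 2) :
    p * deriv (fun v => KH a b c v q r) p + q * deriv (fun v => KH a b c p v r) q
        + 2 * r * deriv (fun v => KH a b c p q v) r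
      - (a * deriv (fun v => KH v b c p q r) a + b * deriv (fun v => KH a v c p q r) b
        + 2 * c * deriv (fun v => KH a b v p q r) c) = 2 * KH a b c p q r := by
  rw [(hasDerivAt_KH_px a b c p q r).deriv, (hasDerivAt_KH_py a b c p q r).deriv,
    (hasDerivAt_KH_pz a b c p q r).deriv, (hasDerivAt_KH_x p q r hρ).deriv,
    (hasDerivAt_KH_y p q r hρ).deriv, (hasDerivAt_KH_z p q r hρ).deriv]
  have hsqrt := Real.sqrt_pos.2 hρ
  unfold KH
  field_simp
  ring

namespace IsSolutionOn

variable {I : Set ℝ} {x y z px py pz : ℝ → ℝ}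

lemma hasDerivAt_Jmom (hsol : IsSolutionOn I x y z px py pz) {t : ℝ} (ht : t ∈ I) :
    HasDerivAt (fun τ => Jmom (x τ) (y τ) (z τ) (px τ) (py τ) (pz τ))
      (2 * KH (x t) (y t) (z t) (px t) (py t) (pz t)) t := by
  obtain ⟨-, -, -, hne, hode⟩ := hsol
  obtain ⟨hx, hy, hz, hpx, hpy, hpz⟩ := hode t ht
  rw [← KH_euler_identity (px t) (py t) (pz t) (sq_add_sq_sq_add_sq_pos (hne t ht))]
  exact (((hx.mul hpx).add (hy.mul hpy)).add ((hz.const_mul 2).mul hpz)).congr_deriv (by ring)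

lemma Jmom_eq_of_KH_eq_zero (hsol : IsSolutionOn I x y z px py pz)
    (hH : ∀ t ∈ I, KH (x t) (y t) (z t) (px t) (py t) (pz t) = 0) {s t : ℝ} (hs : s ∈ I)
    (ht : t ∈ I) :
    Jmom (x s) (y s) (z s) (px s) (py s) (pz s) = Jmom (x t) (y t) (z t) (px t) (py t) (pz t) :=
  hsol.1.is_const_of_deriv_eq_zero hsol.2.1.isPreconnected
    (fun τ hτ => (hsol.hasDerivAt_Jmom hτ).differentiableAt.differentiableWithinAt)
    (fun τ hτ => by rw [(hsol.hasDerivAt_Jmom hτ).deriv, hH τ hτ, mul_zero]; rfl) hs ht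

end IsSolutionOn

lemma sq_Jmom_le_of_KH_eq_zero {a b p q r : ℝ} (hH : KH a b 0 p q r = 0) :
    Jmom a b 0 p q r ^ 2 ≤ 1 / (4 * π) := by
  have hsqrt : √((a ^ 2 + b ^ 2) ^ 2 + 16 * 0 ^ 2) = a ^ 2 + b ^ 2 := by
    rw [zero_pow two_ne_zero, mul_zero, add_zero, Real.sqrt_sq (by positivity)]
  have hkin : (p - b * r / 2) ^ 2 + (q + a * r / 2) ^ 2 = 2 / (8 * π * (a ^ 2 + b ^ 2)) := by
    unfold KH at hH
    rw [hsqrt] at hH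
    linear_combination 2 * hH
  calc Jmom a b 0 p q r ^ 2 = (a * (p - b * r / 2) + b * (q + a * r / 2)) ^ 2 := by
        unfold Jmom; ring
    _ ≤ (a ^ 2 + b ^ 2) * ((p - b * r / 2) ^ 2 + (q + a * r / 2) ^ 2) := by
        nlinarith [sq_nonneg (a * (q + a * r / 2) - b * (p - b * r / 2))]
    _ = (a ^ 2 + b ^ 2) / (a ^ 2 + b ^ 2) / (4 * π) := by rw [hkin]; field_simp; ring
    -- `s / s ≤ 1` also covers `a = b = 0`, where the potential term is the junk value `1 / 0`.
    _ ≤ 1 / (4 * π) := by gcongr; exact div_self_le_one _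

lemma abs_Jmom_le_of_KH_eq_zero {a b p q r : ℝ} (hH : KH a b 0 p q r = 0) :
    |Jmom a b 0 p q r| ≤ 1 / (2 * √π) := by
  have h : √(1 / (4 * π)) = 1 / (2 * √π) := by
    rw [Real.sqrt_div' _ (by positivity), Real.sqrt_one, show (4 : ℝ) = 2 ^ 2 by norm_num,
      Real.sqrt_mul (by positivity), Real.sqrt_sq zero_le_two]
  exact h ▸ Real.abs_le_sqrt (sq_Jmom_le_of_KH_eq_zero hH)

theorem kepler_heisenberg_J_bound_general
    (I : Set ℝ) (x y z px py pz : ℝ → ℝ)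
    (hsol : IsSolutionOn I x y z px py pz)
    (hH : ∀ t ∈ I, KH (x t) (y t) (z t) (px t) (py t) (pz t) = 0)
    (t₀ : ℝ) (ht₀ : t₀ ∈ I) (hz₀ : z t₀ = 0) :
    ∀ t ∈ I, |Jmom (x t) (y t) (z t) (px t) (py t) (pz t)| ≤ 1 / (2 * Real.sqrt π) := by
  intro t ht
  rw [hsol.Jmom_eq_of_KH_eq_zero hH ht ht₀, hz₀]
  exact abs_Jmom_le_of_KH_eq_zero (hz₀ ▸ hH t₀ ht₀)

/-- **Proposition (uniform bound on dilational momentum).** For any zero-energy solution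
avoiding the `z`-axis whose `z`-coordinate vanishes at some time, the (constant) dilational
momentum satisfies `|J| ≤ 1/(2√π)`. -/
theorem kepler_heisenberg_J_bound
    (I : Set ℝ) (x y z px py pz : ℝ → ℝ)
    (hsol : IsSolutionOn I x y z px py pz)
    (hH : ∀ t ∈ I, KH (x t) (y t) (z t) (px t) (py t) (pz t) = 0)
    (hxy : ∀ t ∈ I, (x t, y t) ≠ (0, 0))
    (t₀ : ℝ) (ht₀ : t₀ ∈ I) (hz₀ : z t₀ = 0) :
    ∀ t ∈ I, |Jmom (x t) (y t) (z t) (px t) (py t) (pz t)| ≤ 1 / (2 * Real.sqrt π) :=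
  kepler_heisenberg_J_bound_general I x y z px py pz hsol hH t₀ ht₀ hz₀
end
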